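/- arXiv:2108.11955 — 6 statements merged into one kernel-verified Lean document; each statement's English description precedes it below -/
import Mathlib

section
/- Let A be a unital C*-algebra and H a selfadjoint element of A whose real spectrum is contained in {x : |x| ≥ δ} for some δ > 0. Then H is invertible, the absolute value |H| (defined by the continuous functional calculus applied to x ↦ |x|) is invertible, the map λ ↦ (H² + λ²·1)⁻¹ is Bochner integrable on (0,∞), and (2/π) ∫₀^∞ (H² + λ²·1)⁻¹ dλ = |H|⁻¹. -/
open MeasureTheory Set Real

/-!
Functional calculus turns the claim into the scalar identity
`∫₀^∞ (x² + λ²)⁻¹ dλ = π / (2|x|)` on the spectrum of `H`. Integral and functional calculus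
commute because, with `|x| ≥ δ` on the spectrum, the integrands are dominated uniformly in `x`
by the integrable function `λ ↦ (δ² + λ²)⁻¹`.
-/

lemma inv_sq_add_sq_eq_inv_sq_mul {c : ℝ} (hc : c ≠ 0) (l : ℝ) :
    (c ^ 2 + l ^ 2)⁻¹ = c⁻¹ ^ 2 * (1 + (l / c) ^ 2)⁻¹ := by
  field_simp

lemma integrable_inv_sq_add_sq {c : ℝ} (hc : c ≠ 0) :
    Integrable fun l : ℝ => (c ^ 2 + l ^ 2)⁻¹ := by
  simp_rw [inv_sq_add_sq_eq_inv_sq_mul hc]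
  exact (integrable_inv_one_add_sq.comp_div hc).const_mul _

lemma integral_Ioi_inv_sq_add_sq {c : ℝ} (hc : 0 < c) :
    ∫ l in Ioi (0 : ℝ), (c ^ 2 + l ^ 2)⁻¹ = π / (2 * c) := by
  simp_rw [inv_sq_add_sq_eq_inv_sq_mul hc.ne', div_eq_mul_inv _ c]
  rw [integral_const_mul, integral_comp_mul_right_Ioi (fun x => (1 + x ^ 2)⁻¹) 0 (inv_pos.mpr hc),
    zero_mul, integral_Ioi_inv_one_add_sq, arctan_zero]
  field_simp
  ring

lemma norm_inv_sq_add_sq_le {δ x : ℝ} (hδ : 0 < δ) (hx : δ ≤ |x|) (l : ℝ) :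
    ‖(x ^ 2 + l ^ 2)⁻¹‖ ≤ (δ ^ 2 + l ^ 2)⁻¹ := by
  have hδx : δ ^ 2 ≤ x ^ 2 := sq_le_sq.mpr (by rwa [abs_of_pos hδ])
  rw [Real.norm_of_nonneg (by positivity)]
  exact inv_anti₀ (by positivity) (by linarith)

lemma continuousOn_inv_sq_add_sq :
    ContinuousOn (Function.uncurry fun l x : ℝ => (x ^ 2 + l ^ 2)⁻¹) (Ioi 0 ×ˢ univ) :=
  ContinuousOn.inv₀ (f := fun p : ℝ × ℝ => p.2 ^ 2 + p.1 ^ 2) (by fun_prop)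
    fun p ⟨(hp : 0 < p.1), _⟩ => by positivity

section

variable {A : Type*} [CStarAlgebra A] {H : A}

lemma cfc_sq_add_sq (hH : IsSelfAdjoint H) (l : ℝ) :
    cfc (fun x : ℝ => x ^ 2 + l ^ 2) H = H ^ 2 + l ^ 2 • (1 : A) := by
  rw [cfc_add .., cfc_pow_id .., cfc_const .., Algebra.algebraMap_eq_smul_one]

lemma ring_inverse_sq_add_sq_smul_one (hH : IsSelfAdjoint H) {l : ℝ} (hl : l ≠ 0) :
    Ring.inverse (H ^ 2 + l ^ 2 • (1 : A)) = cfc (fun x : ℝ => (x ^ 2 + l ^ 2)⁻¹) H := by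
  rw [← cfc_sq_add_sq hH, cfc_inv _ _ fun x _ => by positivity]

lemma isUnit_sq_add_sq_smul_one (hH : IsSelfAdjoint H) {l : ℝ} (hl : l ≠ 0) :
    IsUnit (H ^ 2 + l ^ 2 • (1 : A)) := by
  rw [← cfc_sq_add_sq hH]
  exact isUnit_cfc _ H (by fun_prop) hH fun x _ => by positivity

lemma integrableOn_cfc_inv_sq_add_sq (hH : IsSelfAdjoint H) {δ : ℝ} (hδ : 0 < δ)
    (hspec : spectrum ℝ H ⊆ {x : ℝ | δ ≤ |x|}) :
    IntegrableOn (fun l : ℝ => cfc (fun x : ℝ => (x ^ 2 + l ^ 2)⁻¹) H) (Ioi 0) :=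
  integrableOn_cfc measurableSet_Ioi _ _ H
    (continuousOn_inv_sq_add_sq.mono (prod_mono le_rfl (subset_univ _)))
    (ae_of_all _ fun l _ hx => norm_inv_sq_add_sq_le hδ (hspec hx) l)
    (integrable_inv_sq_add_sq hδ.ne').hasFiniteIntegral.restrict hH

lemma setIntegral_cfc_inv_sq_add_sq (hH : IsSelfAdjoint H) {δ : ℝ} (hδ : 0 < δ)
    (hspec : spectrum ℝ H ⊆ {x : ℝ | δ ≤ |x|}) :
    ∫ l in Ioi (0 : ℝ), cfc (fun x : ℝ => (x ^ 2 + l ^ 2)⁻¹) H =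
      cfc (fun x : ℝ => π / (2 * |x|)) H := by
  rw [← cfc_setIntegral measurableSet_Ioi _ _ H
    (continuousOn_inv_sq_add_sq.mono (prod_mono le_rfl (subset_univ _)))
    (ae_of_all _ fun l _ hx => norm_inv_sq_add_sq_le hδ (hspec hx) l)
    (integrable_inv_sq_add_sq hδ.ne').hasFiniteIntegral.restrict hH]
  refine cfc_congr fun x hx => ?_
  rw [← sq_abs, integral_Ioi_inv_sq_add_sq (hδ.trans_le (hspec hx))]

end

/-- Let `A` be a unital C*-algebra and `H` a selfadjoint element whose real spectrum is
contained in `{x : |x| ≥ δ}` for some `δ > 0`. Then `H` is invertible, `|H|` (continuous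
functional calculus of the absolute value) is invertible, the map `λ ↦ (H² + λ²·1)⁻¹` is
Bochner integrable on `(0,∞)`, and `(2/π) ∫₀^∞ (H² + λ²·1)⁻¹ dλ = |H|⁻¹`. -/
theorem abs_inv_eq_two_div_pi_integral_resolvent {A : Type*} [CStarAlgebra A]
    (δ : ℝ) (hδ : 0 < δ) (H : A) (hH : IsSelfAdjoint H)
    (hspec : spectrum ℝ H ⊆ {x : ℝ | δ ≤ |x|}) :
    IsUnit H ∧ IsUnit (cfc (fun x : ℝ => |x|) H) ∧
    (∀ l : ℝ, 0 < l → IsUnit (H ^ 2 + l ^ 2 • (1 : A))) ∧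
    IntegrableOn (fun l : ℝ => Ring.inverse (H ^ 2 + l ^ 2 • (1 : A))) (Ioi 0) volume ∧
    (2 / Real.pi) • ∫ l in Ioi (0 : ℝ), Ring.inverse (H ^ 2 + l ^ 2 • (1 : A)) =
      Ring.inverse (cfc (fun x : ℝ => |x|) H) := by
  have habs : ∀ x ∈ spectrum ℝ H, |x| ≠ 0 := fun x hx => (hδ.trans_le (hspec hx)).ne'
  have hresolvent : EqOn (fun l : ℝ => Ring.inverse (H ^ 2 + l ^ 2 • (1 : A)))
      (fun l => cfc (fun x : ℝ => (x ^ 2 + l ^ 2)⁻¹) H) (Ioi 0) :=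
    fun l hl => ring_inverse_sq_add_sq_smul_one hH hl.ne'
  refine ⟨(spectrum.zero_notMem_iff ℝ).mp fun h => habs 0 h abs_zero,
    isUnit_cfc _ H continuous_abs.continuousOn hH habs,
    fun l hl => isUnit_sq_add_sq_smul_one hH hl.ne',
    (integrableOn_cfc_inv_sq_add_sq hH hδ hspec).congr_fun hresolvent.symm measurableSet_Ioi, ?_⟩
  rw [setIntegral_congr_fun measurableSet_Ioi hresolvent, setIntegral_cfc_inv_sq_add_sq hH hδ hspec,
    ← cfc_smul .., ← cfc_inv _ _ habs]
  refine cfc_congr fun x hx => ?_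
  have hπ : π ≠ 0 := pi_ne_zero
  rw [smul_eq_mul]
  field_simp
end

section
/- Let A be a unital C*-algebra and H a selfadjoint element of A. Then H² + 1 is invertible, the map s ↦ (H² + (s²+1)·1)⁻¹ is Bochner integrable on (0,∞), and (2/π) ∫₀^∞ (H² + (s²+1)·1)⁻¹ ds = (H²+1)^{−1/2}, where (H²+1)^{−1/2} denotes the continuous functional calculus of H applied to x ↦ (x²+1)^{−1/2}. -/
open MeasureTheory Set Real

/-!
The resolvents `(H² + (s² + 1))⁻¹` are the continuous functional calculus of `H` applied to
`x ↦ (x² + s² + 1)⁻¹`, uniformly bounded on the spectrum by the integrable `(s² + 1)⁻¹`, so the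
functional calculus commutes with the integral. This reduces the identity to the scalar one
`∫₀^∞ (s² + c)⁻¹ ds = π / (2√c)` at `c = x² + 1`, which is the substitution `s = √c t` in
`∫₀^∞ (1 + t²)⁻¹ dt = π / 2`.
-/

theorem integral_Ioi_inv_sq_add {c : ℝ} (hc : 0 < c) :
    ∫ s in Ioi (0 : ℝ), (s ^ 2 + c)⁻¹ = π / 2 * c ^ (-(1 / 2) : ℝ) := by
  have hsub := integral_comp_mul_left_Ioi (fun t : ℝ => (1 + t ^ 2)⁻¹) 0
    (inv_pos.mpr (sqrt_pos.mpr hc))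
  have hscale (s : ℝ) : (1 + ((√c)⁻¹ * s) ^ 2)⁻¹ = c * (s ^ 2 + c)⁻¹ := by
    rw [mul_pow, inv_pow, sq_sqrt hc.le]
    field_simp
    ring
  simp only [hscale, integral_const_mul, mul_zero, integral_Ioi_inv_one_add_sq, arctan_zero,
    sub_zero, inv_inv, smul_eq_mul] at hsub
  have hI : ∫ s in Ioi (0 : ℝ), (s ^ 2 + c)⁻¹ = √c * (π / 2) / c :=
    eq_div_of_mul_eq hc.ne' (by rw [mul_comm, hsub])
  rw [hI, rpow_neg hc.le, ← sqrt_eq_rpow, mul_div_right_comm, sqrt_div_self', one_div, mul_comm]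

theorem integral_Ioi_inv_sq_add_sq_add_one (x : ℝ) :
    ∫ s in Ioi (0 : ℝ), (x ^ 2 + (s ^ 2 + 1))⁻¹ = π / 2 * (x ^ 2 + 1) ^ (-(1 / 2) : ℝ) := by
  simp only [add_left_comm (x ^ 2)]
  exact integral_Ioi_inv_sq_add (by positivity)

theorem norm_inv_sq_add_le (x : ℝ) {c : ℝ} (hc : 0 < c) : ‖(x ^ 2 + c)⁻¹‖ ≤ c⁻¹ := by
  rw [norm_inv, Real.norm_of_nonneg (by positivity)]
  exact inv_anti₀ hc (le_add_of_nonneg_left (sq_nonneg x))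

theorem continuous_uncurry_inv_sq_add_sq_add_one :
    Continuous (Function.uncurry fun s x : ℝ => (x ^ 2 + (s ^ 2 + 1))⁻¹) :=
  Continuous.inv₀ (by fun_prop) fun _ => by positivity

theorem continuous_rpow_sq_add_one (r : ℝ) : Continuous fun x : ℝ => (x ^ 2 + 1) ^ r :=
  (by fun_prop : Continuous fun x : ℝ => x ^ 2 + 1).rpow_const fun _ => .inl (by positivity)

namespace IsSelfAdjoint

variable {A : Type*} [Ring A] [StarRing A] [TopologicalSpace A] [Algebra ℝ A]
  [ContinuousFunctionalCalculus ℝ A IsSelfAdjoint] {H : A}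

theorem sq_add_smul_one_eq_cfc (hH : IsSelfAdjoint H) (c : ℝ) :
    H ^ 2 + c • (1 : A) = cfc (fun x : ℝ => x ^ 2 + c) H := by
  rw [cfc_add .., cfc_pow_id H 2, cfc_const c H, Algebra.algebraMap_eq_smul_one]

theorem isUnit_sq_add_smul_one (hH : IsSelfAdjoint H) {c : ℝ} (hc : 0 < c) :
    IsUnit (H ^ 2 + c • (1 : A)) := by
  rw [hH.sq_add_smul_one_eq_cfc]
  exact (isUnit_cfc_iff _ H).mpr fun x _ => by positivity

theorem ring_inverse_sq_add_smul_one (hH : IsSelfAdjoint H) {c : ℝ} (hc : 0 < c) :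
    Ring.inverse (H ^ 2 + c • (1 : A)) = cfc (fun x : ℝ => (x ^ 2 + c)⁻¹) H := by
  rw [hH.sq_add_smul_one_eq_cfc, ← cfc_inv _ H fun x _ => by positivity]

end IsSelfAdjoint

/-- Let `A` be a unital C*-algebra and `H` a selfadjoint element of `A`. Then `H² + 1` is
invertible, the map `s ↦ (H² + (s²+1)·1)⁻¹` is Bochner integrable on `(0,∞)`, and
`(2/π) ∫₀^∞ (H² + (s²+1)·1)⁻¹ ds = (H²+1)^{−1/2}`, the latter being the continuous
functional calculus of `H` applied to `x ↦ (x²+1)^{−1/2}`. -/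
theorem inv_sqrt_sq_add_one_eq_two_div_pi_integral_resolvent {A : Type*} [CStarAlgebra A]
    (H : A) (hH : IsSelfAdjoint H) :
    IsUnit (H ^ 2 + 1) ∧
    IntegrableOn (fun s : ℝ => Ring.inverse (H ^ 2 + (s ^ 2 + 1) • (1 : A))) (Ioi 0) volume ∧
    (2 / Real.pi) • ∫ s in Ioi (0 : ℝ), Ring.inverse (H ^ 2 + (s ^ 2 + 1) • (1 : A)) =
      cfc (fun x : ℝ => (x ^ 2 + 1) ^ (-(1 / 2) : ℝ)) H := by
  have hres (s : ℝ) : Ring.inverse (H ^ 2 + (s ^ 2 + 1) • (1 : A)) =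
      cfc (fun x : ℝ => (x ^ 2 + (s ^ 2 + 1))⁻¹) H :=
    hH.ring_inverse_sq_add_smul_one (by positivity)
  have hbound : ∀ᵐ s ∂(volume.restrict (Ioi (0 : ℝ))), ∀ x ∈ spectrum ℝ H,
      ‖(x ^ 2 + (s ^ 2 + 1))⁻¹‖ ≤ (s ^ 2 + 1)⁻¹ :=
    .of_forall fun s x _ => norm_inv_sq_add_le x (by positivity)
  have hbound_int : HasFiniteIntegral (fun s : ℝ => (s ^ 2 + 1)⁻¹) (volume.restrict (Ioi 0)) := by
    simpa only [add_comm] using integrable_inv_one_add_sq.restrict.hasFiniteIntegral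
  have hcont := continuous_uncurry_inv_sq_add_sq_add_one.continuousOn (s := Ioi 0 ×ˢ spectrum ℝ H)
  simp only [hres]
  refine ⟨by simpa using hH.isUnit_sq_add_smul_one one_pos,
    integrableOn_cfc measurableSet_Ioi _ _ H hcont hbound hbound_int, ?_⟩
  rw [← cfc_setIntegral measurableSet_Ioi _ _ H hcont hbound hbound_int]
  simp only [integral_Ioi_inv_sq_add_sq_add_one]
  rw [cfc_const_mul _ _ H (continuous_rpow_sq_add_one _).continuousOn, smul_smul,
    div_mul_div_cancel₀ pi_ne_zero, div_self two_ne_zero, one_smul]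
end

section
/- Let A be a unital C*-algebra, δ > 0, and let H₁, H₂ be selfadjoint elements of A whose real spectra are contained in {x : |x| ≥ δ}. Then ‖ |H₁|⁻¹ − |H₂|⁻¹ ‖ ≤ (1/(2δ³)) ‖H₁² − H₂²‖, where |Hᵢ| denotes the continuous functional calculus of Hᵢ applied to x ↦ |x|. -/
section Aux

variable {A : Type*} [CStarAlgebra A]

lemma aux_contOn {δ : ℝ} (hδ : 0 < δ) {H : A} (hs : spectrum ℝ H ⊆ {x : ℝ | δ ≤ |x|}) :
    ContinuousOn (fun x : ℝ => |x|⁻¹) (spectrum ℝ H) :=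
  ContinuousOn.inv₀ continuous_abs.continuousOn
    (fun z hz => (hδ.trans_le (hs hz)).ne')

lemma aux_mul_inv {δ : ℝ} (hδ : 0 < δ) {H : A} (h : IsSelfAdjoint H)
    (hs : spectrum ℝ H ⊆ {x : ℝ | δ ≤ |x|}) :
    (cfc (fun x : ℝ => |x|) H) * (cfc (fun x : ℝ => |x|⁻¹) H) = 1 := by
  rw [← cfc_mul _ _ H continuous_abs.continuousOn (aux_contOn hδ hs)]
  rw [cfc_congr (g := fun _ : ℝ => (1:ℝ))
    (fun z hz => mul_inv_cancel₀ (hδ.trans_le (hs hz)).ne')]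
  exact cfc_const_one ℝ H h

lemma aux_inv_mul {δ : ℝ} (hδ : 0 < δ) {H : A} (h : IsSelfAdjoint H)
    (hs : spectrum ℝ H ⊆ {x : ℝ | δ ≤ |x|}) :
    (cfc (fun x : ℝ => |x|⁻¹) H) * (cfc (fun x : ℝ => |x|) H) = 1 := by
  rw [← cfc_mul _ _ H (aux_contOn hδ hs) continuous_abs.continuousOn]
  rw [cfc_congr (g := fun _ : ℝ => (1:ℝ))
    (fun z hz => inv_mul_cancel₀ (hδ.trans_le (hs hz)).ne')]
  exact cfc_const_one ℝ H h

lemma aux_inv_norm {δ : ℝ} (hδ : 0 < δ) {H : A}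
    (hs : spectrum ℝ H ⊆ {x : ℝ | δ ≤ |x|}) :
    ‖cfc (fun x : ℝ => |x|⁻¹) H‖ ≤ δ⁻¹ := by
  refine norm_cfc_le (by positivity) fun z hz => ?_
  rw [Real.norm_eq_abs, abs_inv, abs_abs]
  exact inv_anti₀ hδ (hs hz)

lemma aux_sq {H : A} (h : IsSelfAdjoint H) :
    (cfc (fun x : ℝ => |x|) H) * (cfc (fun x : ℝ => |x|) H) = H ^ 2 := by
  rw [← cfc_mul _ _ H continuous_abs.continuousOn continuous_abs.continuousOn,
    cfc_congr (g := fun z : ℝ => z ^ 2) (fun z _ => by show |z| * |z| = z ^ 2; rw [← sq_abs]; ring),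
    cfc_pow (fun z : ℝ => z) 2 H, cfc_id' ℝ H]

lemma aux_shift [Nontrivial A] {δ M : ℝ} (hδ : 0 < δ) (hδM : δ ≤ M) {H : A} (h : IsSelfAdjoint H)
    (hs : spectrum ℝ H ⊆ {x : ℝ | δ ≤ |x|}) (hM : ‖H‖ ≤ M) :
    ‖cfc (fun x : ℝ => |x|) H - algebraMap ℝ A ((M + δ) / 2)‖ ≤ (M - δ) / 2 := by
  rw [← cfc_const ((M + δ) / 2) H h,
    ← cfc_sub (fun x : ℝ => |x|) (fun _ => (M + δ) / 2) H continuous_abs.continuousOn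
      continuousOn_const]
  refine norm_cfc_le (by linarith) fun z hz => ?_
  have h1 : δ ≤ |z| := hs hz
  have h2 : |z| ≤ M := (spectrum.norm_le_norm_of_mem hz).trans hM
  rw [Real.norm_eq_abs, abs_le]
  constructor <;> linarith

end Aux

/-- Let `A` be a unital C*-algebra, `δ > 0`, and `H₁, H₂` selfadjoint elements whose real
spectra are contained in `{x : |x| ≥ δ}`. Then
`‖|H₁|⁻¹ − |H₂|⁻¹‖ ≤ (1/(2δ³)) ‖H₁² − H₂²‖`, where `|Hᵢ|` is the continuous functional
calculus of `Hᵢ` applied to `x ↦ |x|`. -/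
theorem norm_abs_inv_sub_abs_inv_le {A : Type*} [CStarAlgebra A]
    (δ : ℝ) (hδ : 0 < δ) (H₁ H₂ : A) (h₁ : IsSelfAdjoint H₁) (h₂ : IsSelfAdjoint H₂)
    (hs₁ : spectrum ℝ H₁ ⊆ {x : ℝ | δ ≤ |x|}) (hs₂ : spectrum ℝ H₂ ⊆ {x : ℝ | δ ≤ |x|}) :
    ‖Ring.inverse (cfc (fun x : ℝ => |x|) H₁) - Ring.inverse (cfc (fun x : ℝ => |x|) H₂)‖ ≤
      (1 / (2 * δ ^ 3)) * ‖H₁ ^ 2 - H₂ ^ 2‖ := by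
  rcases subsingleton_or_nontrivial A with hA | hA
  · rw [Subsingleton.elim (Ring.inverse (cfc (fun x : ℝ => |x|) H₁) -
      Ring.inverse (cfc (fun x : ℝ => |x|) H₂)) 0, norm_zero]
    positivity
  set a := cfc (fun x : ℝ => |x|) H₁ with ha_def
  set b := cfc (fun x : ℝ => |x|) H₂ with hb_def
  set x := cfc (fun x : ℝ => |x|⁻¹) H₁ with hx_def
  set y := cfc (fun x : ℝ => |x|⁻¹) H₂ with hy_def
  have hax : a * x = 1 := aux_mul_inv hδ h₁ hs₁
  have hxa : x * a = 1 := aux_inv_mul hδ h₁ hs₁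
  have hby : b * y = 1 := aux_mul_inv hδ h₂ hs₂
  have hyb : y * b = 1 := aux_inv_mul hδ h₂ hs₂
  have hinva : Ring.inverse a = x := by
    exact Ring.inverse_unit ⟨a, x, hax, hxa⟩
  have hinvb : Ring.inverse b = y := by
    exact Ring.inverse_unit ⟨b, y, hby, hyb⟩
  -- Sylvester bound: 2δ ‖a - b‖ ≤ ‖H₁² - H₂²‖
  set M : ℝ := max δ (max ‖H₁‖ ‖H₂‖) with hM_def
  have hδM : δ ≤ M := le_max_left _ _
  set c : ℝ := (M + δ) / 2 with hc_def
  set X : A := a - b with hX_def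
  set R : A := H₁ ^ 2 - H₂ ^ 2 with hR_def
  have hsyl : a * X + X * b = R := by
    rw [hX_def, hR_def, ← aux_sq h₁, ← aux_sq h₂]
    noncomm_ring
  set e : A := algebraMap ℝ A c with he_def
  have h1 : e * X = c • X := (Algebra.smul_def c X).symm
  have h2 : X * e = c • X := by
    rw [he_def, ← Algebra.commutes c X]; exact (Algebra.smul_def c X).symm
  have key : R - ((a - e) * X + X * (b - e)) = (2 * c) • X := by
    have : R - ((a - e) * X + X * (b - e)) = (e * X + X * e) := by
      rw [← hsyl]; noncomm_ring
    rw [this, h1, h2, two_mul, add_smul]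
  have hnae : ‖a - e‖ ≤ (M - δ) / 2 :=
    aux_shift hδ hδM h₁ hs₁ ((le_max_left _ _).trans (le_max_right _ _))
  have hnbe : ‖b - e‖ ≤ (M - δ) / 2 :=
    aux_shift hδ hδM h₂ hs₂ ((le_max_right _ _).trans (le_max_right _ _))
  have hXbound : 2 * δ * ‖X‖ ≤ ‖R‖ := by
    have h2c : ‖(2 * c) • X‖ = (2 * c) * ‖X‖ := by
      rw [norm_smul, Real.norm_eq_abs, abs_of_pos (by rw [hc_def]; linarith)]
    have := key ▸ (norm_sub_le R ((a - e) * X + X * (b - e)))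
    have hsum : ‖(a - e) * X + X * (b - e)‖ ≤ (M - δ) * ‖X‖ := by
      calc ‖(a - e) * X + X * (b - e)‖ ≤ ‖(a - e) * X‖ + ‖X * (b - e)‖ := norm_add_le _ _
        _ ≤ ‖a - e‖ * ‖X‖ + ‖X‖ * ‖b - e‖ := by
            gcongr <;> exact norm_mul_le _ _
        _ ≤ (M - δ) / 2 * ‖X‖ + ‖X‖ * ((M - δ) / 2) := by
            gcongr <;> first | exact hnae | exact hnbe | positivity
        _ = (M - δ) * ‖X‖ := by ring
    rw [h2c] at this
    have hXnn : (0:ℝ) ≤ ‖X‖ := norm_nonneg _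
    nlinarith [this, hsum]
  -- final computation
  have hdiff : x - y = x * (b - a) * y := by
    rw [mul_sub, sub_mul, mul_assoc, hby, mul_one, hxa, one_mul]
  rw [hinva, hinvb, hdiff]
  have hnx : ‖x‖ ≤ δ⁻¹ := aux_inv_norm hδ hs₁
  have hny : ‖y‖ ≤ δ⁻¹ := aux_inv_norm hδ hs₂
  have hba : ‖b - a‖ = ‖X‖ := by rw [hX_def, norm_sub_rev]
  calc ‖x * (b - a) * y‖ ≤ ‖x‖ * ‖b - a‖ * ‖y‖ := by
        exact (norm_mul_le _ _).trans
          (mul_le_mul_of_nonneg_right (norm_mul_le _ _) (norm_nonneg _))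
    _ ≤ δ⁻¹ * ‖X‖ * δ⁻¹ := by rw [hba]; gcongr <;> positivity
    _ ≤ (1 / (2 * δ ^ 3)) * ‖R‖ := by
        rw [div_mul_eq_mul_div, one_mul, le_div_iff₀ (by positivity)]
        calc δ⁻¹ * ‖X‖ * δ⁻¹ * (2 * δ ^ 3) = (2 * δ * ‖X‖) * (δ * δ⁻¹) * (δ * δ⁻¹) := by ring
          _ = 2 * δ * ‖X‖ := by rw [mul_inv_cancel₀ hδ.ne']; ring
          _ ≤ ‖R‖ := hXbound
end

section
/- Let A be a unital C*-algebra, δ > 0, R ≥ 0, and let H₁, H₂ be selfadjoint elements of A with ‖Hᵢ‖ ≤ R and whose real spectra are contained in {x : |x| ≥ δ}. Then ‖ sgn(H₁) − sgn(H₂) ‖ ≤ (1/δ + R²/δ³) ‖H₁ − H₂‖, where sgn(Hᵢ) denotes the continuous functional calculus of Hᵢ applied to the sign function x ↦ x/|x| (which is continuous on the spectrum of Hᵢ). -/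
/-!
Write `sgn H = H * (H²)^(-1/2)`, so that
`sgn H₁ - sgn H₂ = (H₁ - H₂) (H₁²)^(-1/2) + H₂ ((H₁²)^(-1/2) - (H₂²)^(-1/2))`.
The first term is at most `‖H₁ - H₂‖ / δ`. For the second, the inverse square root is operator
antitone, so `a ≤ b + ‖a - b‖` gives `b^(-1/2) - a^(-1/2) ≤ b^(-1/2) - (b + ‖a - b‖)^(-1/2)`,
a function of `b` alone, which the scalar estimate on `[δ², ∞)` bounds by `‖a - b‖ / (2δ³)`.
With `a, b = H₁², H₂²` and `‖H₁² - H₂²‖ ≤ 2R ‖H₁ - H₂‖` this gives the term `R² / δ³`.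
-/

open CFC

lemma Real.inv_sqrt_sub_inv_sqrt_add_le {δ x ε : ℝ} (hδ : 0 < δ) (hx : δ ^ 2 ≤ x)
    (hε : 0 ≤ ε) : (√x)⁻¹ - (√(x + ε))⁻¹ ≤ ε / (2 * δ ^ 3) := by
  set s := √x
  set t := √(x + ε)
  have hs : δ ≤ s := Real.le_sqrt_of_sq_le hx
  have ht : δ ≤ t := Real.le_sqrt_of_sq_le (by linarith)
  have hs0 : 0 < s := hδ.trans_le hs
  have ht0 : 0 < t := hδ.trans_le ht
  have hε_eq : ε = (t - s) * (t + s) := by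
    have : t ^ 2 - s ^ 2 = ε := by
      rw [Real.sq_sqrt (by nlinarith), Real.sq_sqrt (by nlinarith)]; ring
    rw [← this]; ring
  calc s⁻¹ - t⁻¹ = ε / ((t + s) * (s * t)) := by
        rw [hε_eq]; field_simp
    _ ≤ ε / (2 * δ ^ 3) :=
        div_le_div_of_nonneg_left hε (by positivity)
          (by nlinarith [mul_le_mul hs ht hδ.le hs0.le])

lemma Real.rpow_neg_one_half_eq_inv_sqrt {x : ℝ} (hx : 0 ≤ x) :
    x ^ (-(1 / 2) : ℝ) = (√x)⁻¹ := by
  rw [Real.rpow_neg hx, Real.sqrt_eq_rpow]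

lemma norm_mul_sub_mul_le {R : Type*} [NonUnitalSeminormedRing R] (a b x y : R) :
    ‖a * x - b * y‖ ≤ ‖a - b‖ * ‖x‖ + ‖b‖ * ‖x - y‖ := by
  rw [show a * x - b * y = (a - b) * x + b * (x - y) by noncomm_ring]
  exact (norm_add_le _ _).trans (add_le_add (norm_mul_le _ _) (norm_mul_le _ _))

lemma norm_sq_sub_sq_le {R : Type*} [SeminormedRing R] (a b : R) :
    ‖a ^ 2 - b ^ 2‖ ≤ (‖a‖ + ‖b‖) * ‖a - b‖ := by
  rw [sq, sq]
  linarith [norm_mul_sub_mul_le a b a b]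

section Order

variable {A : Type*} [CStarAlgebra A] [PartialOrder A] [StarOrderedRing A]

lemma IsSelfAdjoint.norm_le_of_mem_Icc {x : A} (hx : IsSelfAdjoint x) {c : ℝ} (hc : 0 ≤ c)
    (h : x ∈ Set.Icc (-algebraMap ℝ A c) (algebraMap ℝ A c)) : ‖x‖ ≤ c := by
  have hlow := (algebraMap_le_iff_le_spectrum (r := -c) hx).1 (by simpa using h.1)
  have hup := (le_algebraMap_iff_spectrum_le hx).1 h.2
  rw [← cfc_id' ℝ x]
  exact norm_cfc_le hc fun t ht => abs_le.2 ⟨hlow t ht, hup t ht⟩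

namespace CStarAlgebra

lemma rpow_neg_one_half_le_rpow_neg_one_half {a b : A} (hab : a ≤ b)
    (ha : IsStrictlyPositive a) : b ^ (-(1 / 2) : ℝ) ≤ a ^ (-(1 / 2) : ℝ) := by
  have hsplit : ∀ c : A, IsStrictlyPositive c →
      c ^ (-(1 / 2) : ℝ) = (c ^ (1 / 2 : ℝ)) ^ (-1 : ℝ) := fun c hc => by
    rw [rpow_rpow c _ _ (by norm_num)]; norm_num
  rw [hsplit a ha, hsplit b (ha.of_le hab)]
  exact rpow_neg_one_le_rpow_neg_one (rpow_le_rpow ⟨by norm_num, by norm_num⟩ hab)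
    (IsStrictlyPositive.rpow a _ ha)

lemma rpow_neg_one_half_sub_rpow_neg_one_half_add_le {δ ε : ℝ} (hδ : 0 < δ) (hε : 0 ≤ ε)
    {b : A} (hb : algebraMap ℝ A (δ ^ 2) ≤ b) :
    b ^ (-(1 / 2) : ℝ) - (b + algebraMap ℝ A ε) ^ (-(1 / 2) : ℝ)
      ≤ algebraMap ℝ A (ε / (2 * δ ^ 3)) := by
  have hb0 : 0 ≤ b := (isStrictlyPositive_algebraMap (by positivity)).nonneg.trans hb
  have hspec : ∀ x ∈ spectrum ℝ b, δ ^ 2 ≤ x :=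
    (algebraMap_le_iff_le_spectrum hb0.isSelfAdjoint).1 hb
  have hpos : ∀ x ∈ spectrum ℝ b, 0 < x :=
    fun x hx => (by positivity : 0 < δ ^ 2).trans_le (hspec x hx)
  have hshift : b + algebraMap ℝ A ε = cfc (fun x : ℝ => x + ε) b := by
    rw [cfc_add_const ε (fun x : ℝ => x) b, cfc_id' ℝ b]
  have hc₁ : ContinuousOn (fun x : ℝ => x ^ (-(1 / 2) : ℝ)) (spectrum ℝ b) :=
    ContinuousOn.rpow_const (by fun_prop) fun x hx => Or.inl (hpos x hx).ne'
  have hc₂ : ContinuousOn (fun x : ℝ => (x + ε) ^ (-(1 / 2) : ℝ)) (spectrum ℝ b) :=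
    ContinuousOn.rpow_const (by fun_prop) fun x hx => Or.inl (by linarith [hpos x hx])
  rw [rpow_eq_cfc_real hb0, hshift, cfc_rpow (fun x hx => by linarith [hpos x hx]),
    ← cfc_sub _ _ b hc₁ hc₂]
  refine cfc_le_algebraMap _ _ b fun x hx => ?_
  rw [Real.rpow_neg_one_half_eq_inv_sqrt (hpos x hx).le,
    Real.rpow_neg_one_half_eq_inv_sqrt (by linarith [hpos x hx])]
  exact Real.inv_sqrt_sub_inv_sqrt_add_le hδ (hspec x hx) hε

lemma rpow_neg_one_half_sub_rpow_neg_one_half_le {δ : ℝ} (hδ : 0 < δ) {a b : A}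
    (ha : algebraMap ℝ A (δ ^ 2) ≤ a) (hb : algebraMap ℝ A (δ ^ 2) ≤ b) :
    b ^ (-(1 / 2) : ℝ) - a ^ (-(1 / 2) : ℝ) ≤ algebraMap ℝ A (‖a - b‖ / (2 * δ ^ 3)) := by
  have ha_pos : IsStrictlyPositive a := (isStrictlyPositive_algebraMap (by positivity)).of_le ha
  have hb0 : 0 ≤ b := (isStrictlyPositive_algebraMap (by positivity)).nonneg.trans hb
  have hab : a ≤ b + algebraMap ℝ A ‖a - b‖ := sub_le_iff_le_add'.1
    (ha_pos.nonneg.isSelfAdjoint.sub hb0.isSelfAdjoint).le_algebraMap_norm_self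
  calc b ^ (-(1 / 2) : ℝ) - a ^ (-(1 / 2) : ℝ)
      ≤ b ^ (-(1 / 2) : ℝ) - (b + algebraMap ℝ A ‖a - b‖) ^ (-(1 / 2) : ℝ) :=
        sub_le_sub_left (rpow_neg_one_half_le_rpow_neg_one_half hab ha_pos) _
    _ ≤ algebraMap ℝ A (‖a - b‖ / (2 * δ ^ 3)) :=
        rpow_neg_one_half_sub_rpow_neg_one_half_add_le hδ (norm_nonneg _) hb

lemma norm_rpow_neg_one_half_sub_le {δ : ℝ} (hδ : 0 < δ) {a b : A}
    (ha : algebraMap ℝ A (δ ^ 2) ≤ a) (hb : algebraMap ℝ A (δ ^ 2) ≤ b) :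
    ‖a ^ (-(1 / 2) : ℝ) - b ^ (-(1 / 2) : ℝ)‖ ≤ ‖a - b‖ / (2 * δ ^ 3) := by
  refine IsSelfAdjoint.norm_le_of_mem_Icc
    (rpow_nonneg.isSelfAdjoint.sub rpow_nonneg.isSelfAdjoint) (by positivity) ⟨?_, ?_⟩
  · rw [neg_le, neg_sub]
    exact rpow_neg_one_half_sub_rpow_neg_one_half_le hδ ha hb
  · rw [norm_sub_rev]
    exact rpow_neg_one_half_sub_rpow_neg_one_half_le hδ hb ha

end CStarAlgebra

lemma algebraMap_sq_le_sq {δ : ℝ} (hδ : 0 ≤ δ) {H : A} (hH : IsSelfAdjoint H)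
    (hs : spectrum ℝ H ⊆ {x : ℝ | δ ≤ |x|}) : algebraMap ℝ A (δ ^ 2) ≤ H ^ 2 := by
  rw [← cfc_pow_id (R := ℝ) H 2]
  refine algebraMap_le_cfc _ _ H fun x hx => ?_
  rw [← sq_abs x]
  exact pow_le_pow_left₀ hδ (hs hx) 2

namespace CFC

lemma sq_rpow_neg_one_half_eq_cfc_inv_abs {H : A} (hH : IsSelfAdjoint H)
    (h0 : 0 ∉ spectrum ℝ H) : (H ^ 2) ^ (-(1 / 2) : ℝ) = cfc (fun x : ℝ => |x|⁻¹) H := by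
  have hne : ∀ x ∈ spectrum ℝ H, x ≠ 0 := fun x hx hx0 => h0 (hx0 ▸ hx)
  rw [← cfc_pow_id (R := ℝ) H 2, cfc_rpow (fun x hx => by positivity [hne x hx])]
  refine cfc_congr fun x _ => ?_
  rw [Real.rpow_neg_one_half_eq_inv_sqrt (sq_nonneg x), Real.sqrt_sq_eq_abs]

lemma cfc_div_abs_eq_mul_sq_rpow_neg_one_half {H : A} (hH : IsSelfAdjoint H)
    (h0 : 0 ∉ spectrum ℝ H) :
    cfc (fun x : ℝ => x / |x|) H = H * (H ^ 2) ^ (-(1 / 2) : ℝ) := by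
  have hcont : ContinuousOn (fun x : ℝ => |x|⁻¹) (spectrum ℝ H) :=
    ContinuousOn.inv₀ (by fun_prop) fun x hx hx0 => h0 (abs_eq_zero.1 hx0 ▸ hx)
  calc cfc (fun x : ℝ => x / |x|) H = cfc (fun x : ℝ => x * |x|⁻¹) H := by
        simp only [div_eq_mul_inv]
    _ = H * cfc (fun x : ℝ => |x|⁻¹) H := by
        rw [cfc_mul _ _ H (by fun_prop) hcont, cfc_id' ℝ H]
    _ = H * (H ^ 2) ^ (-(1 / 2) : ℝ) := by
        rw [sq_rpow_neg_one_half_eq_cfc_inv_abs hH h0]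

lemma norm_sq_rpow_neg_one_half_le {δ : ℝ} (hδ : 0 < δ) {H : A} (hH : IsSelfAdjoint H)
    (hs : spectrum ℝ H ⊆ {x : ℝ | δ ≤ |x|}) : ‖(H ^ 2) ^ (-(1 / 2) : ℝ)‖ ≤ δ⁻¹ := by
  have h0 : 0 ∉ spectrum ℝ H := fun h => by simpa using hδ.trans_le (hs h)
  rw [sq_rpow_neg_one_half_eq_cfc_inv_abs hH h0]
  refine norm_cfc_le (by positivity) fun x hx => ?_
  rw [Real.norm_eq_abs, abs_inv, abs_abs]
  exact inv_anti₀ hδ (hs hx)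

end CFC

end Order

/-- Let `A` be a unital C*-algebra, `δ > 0`, `R ≥ 0`, and `H₁, H₂` selfadjoint elements
with `‖Hᵢ‖ ≤ R` whose real spectra are contained in `{x : |x| ≥ δ}`. Then
`‖sgn(H₁) − sgn(H₂)‖ ≤ (1/δ + R²/δ³) ‖H₁ − H₂‖`, where `sgn(Hᵢ)` is the continuous
functional calculus of `Hᵢ` applied to `x ↦ x/|x|`. -/
theorem norm_sign_sub_sign_le {A : Type*} [CStarAlgebra A]
    (δ R : ℝ) (hδ : 0 < δ) (hR : 0 ≤ R)
    (H₁ H₂ : A) (h₁ : IsSelfAdjoint H₁) (h₂ : IsSelfAdjoint H₂)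
    (hn₁ : ‖H₁‖ ≤ R) (hn₂ : ‖H₂‖ ≤ R)
    (hs₁ : spectrum ℝ H₁ ⊆ {x : ℝ | δ ≤ |x|}) (hs₂ : spectrum ℝ H₂ ⊆ {x : ℝ | δ ≤ |x|}) :
    ‖cfc (fun x : ℝ => x / |x|) H₁ - cfc (fun x : ℝ => x / |x|) H₂‖ ≤
      (1 / δ + R ^ 2 / δ ^ 3) * ‖H₁ - H₂‖ := by
  let _ := CStarAlgebra.spectralOrder A
  have _ := CStarAlgebra.spectralOrderedRing A
  have h0 : ∀ {H : A}, spectrum ℝ H ⊆ {x : ℝ | δ ≤ |x|} → 0 ∉ spectrum ℝ H :=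
    fun hs h => by simpa using hδ.trans_le (hs h)
  rw [cfc_div_abs_eq_mul_sq_rpow_neg_one_half h₁ (h0 hs₁),
    cfc_div_abs_eq_mul_sq_rpow_neg_one_half h₂ (h0 hs₂)]
  have hJ := CStarAlgebra.norm_rpow_neg_one_half_sub_le hδ
    (algebraMap_sq_le_sq hδ.le h₁ hs₁) (algebraMap_sq_le_sq hδ.le h₂ hs₂)
  have hsq : ‖H₁ ^ 2 - H₂ ^ 2‖ ≤ 2 * R * ‖H₁ - H₂‖ :=
    (norm_sq_sub_sq_le H₁ H₂).trans (by gcongr; linarith)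
  calc _ ≤ ‖H₁ - H₂‖ * ‖(H₁ ^ 2) ^ (-(1 / 2) : ℝ)‖
        + ‖H₂‖ * ‖(H₁ ^ 2) ^ (-(1 / 2) : ℝ) - (H₂ ^ 2) ^ (-(1 / 2) : ℝ)‖ :=
        norm_mul_sub_mul_le ..
    _ ≤ ‖H₁ - H₂‖ * δ⁻¹ + R * (2 * R * ‖H₁ - H₂‖ / (2 * δ ^ 3)) := by
        gcongr
        · exact norm_sq_rpow_neg_one_half_le hδ h₁ hs₁
        · exact hJ.trans (by gcongr)
    _ = (1 / δ + R ^ 2 / δ ^ 3) * ‖H₁ - H₂‖ := by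
        field_simp
end

section
/- Let A be a unital C*-algebra, δ > 0, R ≥ 0, and let H₁, H₂ be selfadjoint elements of A with ‖Hᵢ‖ ≤ R and whose real spectra are contained in {x : |x| ≥ δ}. Let P⁺(Hᵢ) denote the continuous functional calculus of Hᵢ applied to the indicator function of (0,∞) (which is continuous on the spectrum of Hᵢ). Then each P⁺(Hᵢ) is a selfadjoint idempotent and ‖ P⁺(H₁) − P⁺(H₂) ‖ ≤ (1/2)(1/δ + R²/δ³) ‖H₁ − H₂‖. -/
/-!
On the spectrum of a selfadjoint `H` avoiding `(-δ, δ)`, the indicator of `(0, ∞)` agrees with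
`x ↦ (1 + x / |x|) / 2`, so `P⁺(H) = (1 + H |H|⁻¹) / 2`. Writing `H₁ |H₁|⁻¹ - H₂ |H₂|⁻¹` as
`(H₁ - H₂) |H₁|⁻¹ + H₂ |H₁|⁻¹ (|H₂| - |H₁|) |H₂|⁻¹` reduces the estimate to a Lipschitz bound for
`|·|`. That bound comes from the Sylvester-type inequality `(α + β) ‖D‖ ≤ ‖a D + D b‖` for
selfadjoint `a, b` with spectra in `[α, ∞)` and `[β, ∞)`, applied to `a = |H₁|`, `b = |H₂|`,
`D = |H₁| - |H₂|`, for which `a D + D b = H₁² - H₂²`.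
-/

open scoped Ring

theorem norm_mul_self_sub_mul_self_le {R : Type*} [NonUnitalSeminormedRing R] (a b : R) :
    ‖a * a - b * b‖ ≤ (‖a‖ + ‖b‖) * ‖a - b‖ :=
  calc ‖a * a - b * b‖ = ‖a * (a - b) + (a - b) * b‖ := by congr 1; noncomm_ring
    _ ≤ ‖a‖ * ‖a - b‖ + ‖a - b‖ * ‖b‖ :=
        (norm_add_le _ _).trans (add_le_add (norm_mul_le _ _) (norm_mul_le _ _))
    _ = (‖a‖ + ‖b‖) * ‖a - b‖ := by ring

theorem isUnit_of_spectrum_subset_Ici {B : Type*} [Ring B] [Algebra ℝ B] {c : B} {δ : ℝ}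
    (hδ : 0 < δ) (hs : spectrum ℝ c ⊆ Set.Ici δ) : IsUnit c :=
  spectrum.zero_notMem_iff ℝ |>.mp fun h => (hs h).not_gt hδ

section CStarAlgebra

variable {A : Type*} [CStarAlgebra A]

/- With `u = (a + m)⁻¹` for some `m ≥ max σ(b)`, one has `D = u (a D + D b) + u D (m - b)`,
where `‖u‖ ≤ (α + m)⁻¹` and `‖m - b‖ ≤ m - β`. -/
theorem mul_norm_le_norm_mul_add_mul {a b : A} {α β : ℝ} (ha : IsSelfAdjoint a)
    (hb : IsSelfAdjoint b) (hsa : spectrum ℝ a ⊆ Set.Ici α) (hsb : spectrum ℝ b ⊆ Set.Ici β)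
    (D : A) : (α + β) * ‖D‖ ≤ ‖a * D + D * b‖ := by
  rcases le_or_gt (α + β) 0 with hαβ | hαβ
  · exact (mul_nonpos_of_nonpos_of_nonneg hαβ (norm_nonneg D)).trans (norm_nonneg _)
  obtain ⟨l, hl⟩ := (spectrum.isCompact (𝕜 := ℝ) b).bddAbove
  set m := max l β
  have hαm : 0 < α + m := by linarith [le_max_right l β]
  have hpos : ∀ x ∈ spectrum ℝ a, 0 < x + m := fun x hx => by linarith [Set.mem_Ici.mp (hsa hx)]
  set U := cfcUnits (· + m) a fun x hx => (hpos x hx).ne'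
  have hU : (U : A) = a + algebraMap ℝ A m := by
    change cfc (· + m) a = _
    rw [cfc_add_const .., cfc_id' ℝ a]
  have hnU : ‖(↑U⁻¹ : A)‖ ≤ (α + m)⁻¹ := by
    change ‖cfc (fun x => (x + m)⁻¹) a‖ ≤ _
    refine norm_cfc_le (inv_nonneg.mpr hαm.le) fun x hx => ?_
    rw [Real.norm_of_nonneg (inv_nonneg.mpr (hpos x hx).le)]
    exact inv_anti₀ hαm (by linarith [Set.mem_Ici.mp (hsa hx)])
  have hnb : ‖algebraMap ℝ A m - b‖ ≤ m - β := by
    rw [show algebraMap ℝ A m - b = cfc (m - ·) b by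
      rw [cfc_sub (fun _ => m) (fun x => x) b, cfc_const m b, cfc_id' ℝ b]]
    refine norm_cfc_le (by linarith [le_max_right l β]) fun x hx => ?_
    rw [Real.norm_of_nonneg (by linarith [hl hx, le_max_left l β])]
    linarith [Set.mem_Ici.mp (hsb hx)]
  have hD : D = ↑U⁻¹ * (a * D + D * b) + ↑U⁻¹ * D * (algebraMap ℝ A m - b) := by
    have : ↑U⁻¹ * (a * D + D * b) + ↑U⁻¹ * D * (algebraMap ℝ A m - b) = ↑U⁻¹ * ↑U * D := by
      rw [hU, mul_sub, mul_assoc _ D, ← Algebra.commutes]; noncomm_ring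
    rw [this, Units.inv_mul, one_mul]
  have hD_le : ‖D‖ ≤ (α + m)⁻¹ * (‖a * D + D * b‖ + (m - β) * ‖D‖) :=
    calc ‖D‖ ≤ ‖(↑U⁻¹ : A)‖ * ‖a * D + D * b‖
          + ‖(↑U⁻¹ : A)‖ * ‖D‖ * ‖algebraMap ℝ A m - b‖ := by
          nth_rw 1 [hD]
          exact (norm_add_le _ _).trans (add_le_add (norm_mul_le _ _) norm_mul₃_le)
      _ ≤ (α + m)⁻¹ * ‖a * D + D * b‖ + (α + m)⁻¹ * ‖D‖ * (m - β) := by gcongr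
      _ = _ := by ring
  rw [le_inv_mul_iff₀ hαm] at hD_le
  linarith

theorem mul_norm_sub_le_norm_mul_self_sub_mul_self {a b : A} {α β : ℝ} (ha : IsSelfAdjoint a)
    (hb : IsSelfAdjoint b) (hsa : spectrum ℝ a ⊆ Set.Ici α) (hsb : spectrum ℝ b ⊆ Set.Ici β) :
    (α + β) * ‖a - b‖ ≤ ‖a * a - b * b‖ := by
  convert mul_norm_le_norm_mul_add_mul ha hb hsa hsb (a - b) using 2
  noncomm_ring

theorem cfc_abs_mul_self (a : A) (ha : IsSelfAdjoint a) :
    cfc (|·| : ℝ → ℝ) a * cfc (|·| : ℝ → ℝ) a = a * a :=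
  calc cfc (|·| : ℝ → ℝ) a * cfc (|·| : ℝ → ℝ) a = cfc (fun x : ℝ => |x| * |x|) a :=
        (cfc_mul ..).symm
    _ = cfc (fun x : ℝ => x * x) a := by simp_rw [abs_mul_abs_self]
    _ = a * a := by rw [cfc_mul .., cfc_id' ℝ a]

theorem spectrum_cfc_abs_subset_Ici {a : A} {α : ℝ} (ha : IsSelfAdjoint a)
    (hs : spectrum ℝ a ⊆ {x | α ≤ |x|}) : spectrum ℝ (cfc (|·| : ℝ → ℝ) a) ⊆ Set.Ici α := by
  rw [cfc_map_spectrum ..]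
  rintro _ ⟨x, hx, rfl⟩
  exact hs hx

theorem norm_ringInverse_le {c : A} {δ : ℝ} (hc : IsSelfAdjoint c) (hδ : 0 < δ)
    (hs : spectrum ℝ c ⊆ Set.Ici δ) : ‖c⁻¹ʳ‖ ≤ δ⁻¹ := by
  rw [← cfc_ringInverse_id (R := ℝ) c (isUnit_of_spectrum_subset_Ici hδ hs)]
  refine norm_cfc_le (inv_nonneg.mpr hδ.le) fun x hx => ?_
  have hx : δ ≤ x := hs hx
  rw [Real.norm_of_nonneg (inv_nonneg.mpr (hδ.trans_le hx).le)]
  exact inv_anti₀ hδ hx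

theorem continuousOn_posIndicator {s : Set ℝ} (hs : 0 ∉ s) :
    ContinuousOn (fun x : ℝ => if 0 < x then (1 : ℝ) else 0) s := by
  refine ContinuousOn.if (fun x hx => ?_) continuousOn_const continuousOn_const
  have hx₀ : x ∈ frontier (Set.Ioi (0 : ℝ)) := hx.2
  rw [frontier_Ioi, Set.mem_singleton_iff] at hx₀
  exact absurd (hx₀ ▸ hx.1) hs

theorem isIdempotentElem_cfc_posIndicator {a : A} (h0 : 0 ∉ spectrum ℝ a) :
    IsIdempotentElem (cfc (fun x : ℝ => if 0 < x then (1 : ℝ) else 0) a) := by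
  have hc := continuousOn_posIndicator h0
  rw [IsIdempotentElem, ← cfc_mul _ _ a hc hc]
  exact cfc_congr fun x _ => by split_ifs <;> norm_num

theorem cfc_posIndicator_eq {a : A} (ha : IsSelfAdjoint a) (h0 : 0 ∉ spectrum ℝ a) :
    cfc (fun x : ℝ => if 0 < x then (1 : ℝ) else 0) a =
      (2⁻¹ : ℝ) • (1 + a * (cfc (|·| : ℝ → ℝ) a)⁻¹ʳ) := by
  have hne : ∀ x ∈ spectrum ℝ a, |x| ≠ 0 := fun x hx =>
    abs_ne_zero.mpr (ne_of_mem_of_not_mem hx h0)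
  have hinv : ContinuousOn (fun x : ℝ => |x|⁻¹) (spectrum ℝ a) :=
    continuous_abs.continuousOn.inv₀ hne
  calc cfc (fun x : ℝ => if 0 < x then (1 : ℝ) else 0) a
      = cfc (fun x : ℝ => (2⁻¹ : ℝ) • (1 + x * |x|⁻¹)) a := by
        refine cfc_congr fun x hx => ?_
        rcases (abs_ne_zero.mp (hne x hx)).lt_or_gt with h | h
        · simp [h.not_gt, abs_of_neg h, h.ne]
        · norm_num [h, abs_of_pos h, h.ne']
    _ = _ := by
        rw [cfc_smul _ (fun x => 1 + x * |x|⁻¹) a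
            (continuousOn_const.add (continuousOn_id.mul hinv)),
          cfc_const_add _ (fun x => x * |x|⁻¹) a (continuousOn_id.mul hinv),
          cfc_mul (fun x => x) (fun x => |x|⁻¹) a continuousOn_id hinv, cfc_id' ℝ a,
          cfc_inv (|·|) a hne, map_one]

theorem norm_mul_ringInverse_cfc_abs_sub_le {a b : A} {δ R : ℝ} (hδ : 0 < δ)
    (ha : IsSelfAdjoint a) (hb : IsSelfAdjoint b) (hna : ‖a‖ ≤ R) (hnb : ‖b‖ ≤ R)
    (hsa : spectrum ℝ a ⊆ {x | δ ≤ |x|}) (hsb : spectrum ℝ b ⊆ {x | δ ≤ |x|}) :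
    ‖a * (cfc (|·| : ℝ → ℝ) a)⁻¹ʳ - b * (cfc (|·| : ℝ → ℝ) b)⁻¹ʳ‖ ≤
      (1 / δ + R ^ 2 / δ ^ 3) * ‖a - b‖ := by
  have hR : 0 ≤ R := (norm_nonneg b).trans hnb
  set c := cfc (|·| : ℝ → ℝ) a
  set d := cfc (|·| : ℝ → ℝ) b
  have hc := spectrum_cfc_abs_subset_Ici ha hsa
  have hd := spectrum_cfc_abs_subset_Ici hb hsb
  have hcd : (δ + δ) * ‖c - d‖ ≤ (R + R) * ‖a - b‖ :=
    calc (δ + δ) * ‖c - d‖ ≤ ‖c * c - d * d‖ :=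
          mul_norm_sub_le_norm_mul_self_sub_mul_self (cfc_predicate _ a) (cfc_predicate _ b) hc hd
      _ = ‖a * a - b * b‖ := by rw [cfc_abs_mul_self a ha, cfc_abs_mul_self b hb]
      _ ≤ (‖a‖ + ‖b‖) * ‖a - b‖ := norm_mul_self_sub_mul_self_le a b
      _ ≤ (R + R) * ‖a - b‖ := by gcongr
  have hinv : c⁻¹ʳ - d⁻¹ʳ = c⁻¹ʳ * (d - c) * d⁻¹ʳ := Ring.inverse_sub_inverse
    (iff_of_true (isUnit_of_spectrum_subset_Ici hδ hc) (isUnit_of_spectrum_subset_Ici hδ hd))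
  have hnc := norm_ringInverse_le (cfc_predicate _ a) hδ hc
  have hnd := norm_ringInverse_le (cfc_predicate _ b) hδ hd
  calc ‖a * c⁻¹ʳ - b * d⁻¹ʳ‖ = ‖(a - b) * c⁻¹ʳ + b * (c⁻¹ʳ * (d - c) * d⁻¹ʳ)‖ := by
        rw [← hinv]; congr 1; noncomm_ring
    _ ≤ ‖a - b‖ * δ⁻¹ + R * (δ⁻¹ * ‖d - c‖ * δ⁻¹) := by
        refine (norm_add_le _ _).trans (add_le_add ((norm_mul_le _ _).trans (by gcongr))
          ((norm_mul_le _ _).trans ?_))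
        gcongr
        exact norm_mul₃_le.trans (by gcongr)
    _ ≤ ‖a - b‖ * δ⁻¹ + R * (δ⁻¹ * (R * ‖a - b‖ / δ) * δ⁻¹) := by
        rw [norm_sub_rev d c]
        gcongr
        rw [le_div_iff₀ hδ]
        linarith
    _ = (1 / δ + R ^ 2 / δ ^ 3) * ‖a - b‖ := by field_simp

end CStarAlgebra

theorem norm_posSpectralProjection_sub_le_general {A : Type*} [CStarAlgebra A]
    (δ R : ℝ) (hδ : 0 < δ)
    (H₁ H₂ : A) (h₁ : IsSelfAdjoint H₁) (h₂ : IsSelfAdjoint H₂)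
    (hn₁ : ‖H₁‖ ≤ R) (hn₂ : ‖H₂‖ ≤ R)
    (hs₁ : spectrum ℝ H₁ ⊆ {x : ℝ | δ ≤ |x|}) (hs₂ : spectrum ℝ H₂ ⊆ {x : ℝ | δ ≤ |x|}) :
    (IsSelfAdjoint (cfc (fun x : ℝ => if 0 < x then (1 : ℝ) else 0) H₁) ∧
      IsIdempotentElem (cfc (fun x : ℝ => if 0 < x then (1 : ℝ) else 0) H₁)) ∧
    (IsSelfAdjoint (cfc (fun x : ℝ => if 0 < x then (1 : ℝ) else 0) H₂) ∧
      IsIdempotentElem (cfc (fun x : ℝ => if 0 < x then (1 : ℝ) else 0) H₂)) ∧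
    ‖cfc (fun x : ℝ => if 0 < x then (1 : ℝ) else 0) H₁ -
        cfc (fun x : ℝ => if 0 < x then (1 : ℝ) else 0) H₂‖ ≤
      (1 / 2) * (1 / δ + R ^ 2 / δ ^ 3) * ‖H₁ - H₂‖ := by
  have h0 : ∀ {H : A}, spectrum ℝ H ⊆ {x | δ ≤ |x|} → 0 ∉ spectrum ℝ H :=
    fun hs h => hδ.not_ge (by simpa using hs h)
  refine ⟨⟨cfc_predicate _ H₁, isIdempotentElem_cfc_posIndicator (h0 hs₁)⟩,
    ⟨cfc_predicate _ H₂, isIdempotentElem_cfc_posIndicator (h0 hs₂)⟩, ?_⟩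
  rw [cfc_posIndicator_eq h₁ (h0 hs₁), cfc_posIndicator_eq h₂ (h0 hs₂), ← smul_sub,
    add_sub_add_left_eq_sub, norm_smul, Real.norm_of_nonneg (by norm_num), mul_assoc, one_div]
  gcongr
  exact norm_mul_ringInverse_cfc_abs_sub_le hδ h₁ h₂ hn₁ hn₂ hs₁ hs₂

/-- Let `A` be a unital C*-algebra, `δ > 0`, `R ≥ 0`, and `H₁, H₂` selfadjoint elements
with `‖Hᵢ‖ ≤ R` whose real spectra are contained in `{x : |x| ≥ δ}`. Let
`P⁺(Hᵢ)` be the continuous functional calculus of `Hᵢ` applied to the indicator function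
of `(0,∞)`. Then each `P⁺(Hᵢ)` is a selfadjoint idempotent and
`‖P⁺(H₁) − P⁺(H₂)‖ ≤ (1/2)(1/δ + R²/δ³) ‖H₁ − H₂‖`. -/
theorem norm_posSpectralProjection_sub_le {A : Type*} [CStarAlgebra A]
    (δ R : ℝ) (hδ : 0 < δ) (hR : 0 ≤ R)
    (H₁ H₂ : A) (h₁ : IsSelfAdjoint H₁) (h₂ : IsSelfAdjoint H₂)
    (hn₁ : ‖H₁‖ ≤ R) (hn₂ : ‖H₂‖ ≤ R)
    (hs₁ : spectrum ℝ H₁ ⊆ {x : ℝ | δ ≤ |x|}) (hs₂ : spectrum ℝ H₂ ⊆ {x : ℝ | δ ≤ |x|}) :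
    (IsSelfAdjoint (cfc (fun x : ℝ => if 0 < x then (1 : ℝ) else 0) H₁) ∧
      IsIdempotentElem (cfc (fun x : ℝ => if 0 < x then (1 : ℝ) else 0) H₁)) ∧
    (IsSelfAdjoint (cfc (fun x : ℝ => if 0 < x then (1 : ℝ) else 0) H₂) ∧
      IsIdempotentElem (cfc (fun x : ℝ => if 0 < x then (1 : ℝ) else 0) H₂)) ∧
    ‖cfc (fun x : ℝ => if 0 < x then (1 : ℝ) else 0) H₁ -
        cfc (fun x : ℝ => if 0 < x then (1 : ℝ) else 0) H₂‖ ≤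
      (1 / 2) * (1 / δ + R ^ 2 / δ ^ 3) * ‖H₁ - H₂‖ :=
  norm_posSpectralProjection_sub_le_general δ R hδ H₁ H₂ h₁ h₂ hn₁ hn₂ hs₁ hs₂
end

section
/- Let E be a complete normed vector space over ℝ, μ > 0, C ≥ 0, let A : [0,∞) → (continuous linear endomorphisms of E) be continuous with ‖A(t)‖ ≤ C (1+t)^{−1−μ} for all t ≥ 0, and let u : [0,∞) → E be differentiable with u′(t) = A(t)(u(t)) for all t ≥ 0. Then: (1) ‖u(t)‖ ≤ exp(C/μ) ‖u(0)‖ for all t ≥ 0; (2) there exists u∞ ∈ E with u(t) → u∞ as t → +∞; (3) ‖u(t) − u∞‖ ≤ (C/μ) exp(C/μ) ‖u(0)‖ (1+t)^{−μ} for all t ≥ 0. -/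
/-!
With `Φ(t) = -(1+t)^{-μ}/μ`, so that `Φ' = (1+t)^{-1-μ}` and `Φ(∞) - Φ(0) = 1/μ`, the bound on `A`
reads `‖A(t)‖ ≤ C Φ'(t)`. Grönwall's inequality with the variable rate `C Φ'` bounds `‖u‖` by
`exp(C/μ) ‖u(0)‖`; hence `‖u'(t)‖ ≤ K Φ'(t)` with `K = C exp(C/μ) ‖u(0)‖`, and so
`‖u(s) - u(t)‖ ≤ K (Φ(s) - Φ(t)) ≤ (K/μ) (1+t)^{-μ}` for `t ≤ s`. This Cauchy estimate gives the
limit and, letting `s → ∞`, the rate.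
-/

open Filter Set Topology Real

/-- Grönwall's inequality with a variable rate. -/
theorem norm_le_mul_exp_sub_of_norm_deriv_right_le {E : Type*} [NormedAddCommGroup E]
    [NormedSpace ℝ E] {f f' : ℝ → E} {Φ φ : ℝ → ℝ} {a b : ℝ}
    (hf : ContinuousOn f (Icc a b)) (hf' : ∀ x ∈ Ico a b, HasDerivWithinAt f (f' x) (Ici x) x)
    (hΦ : ContinuousOn Φ (Icc a b)) (hΦ' : ∀ x ∈ Ico a b, HasDerivWithinAt Φ (φ x) (Ici x) x)
    (bound : ∀ x ∈ Ico a b, ‖f' x‖ ≤ φ x * ‖f x‖) :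
    ∀ x ∈ Icc a b, ‖f x‖ ≤ ‖f a‖ * exp (Φ x - Φ a) := by
  have approx : ∀ ε > 0, ∀ x ∈ Icc a b,
      ‖f x‖ ≤ (‖f a‖ + ε) * exp (Φ x - Φ a + ε * (x - a)) := by
    intro ε hε
    -- the margin `ε` makes the boundary inequality strict, as the fencing theorem requires
    set B : ℝ → ℝ := fun x ↦ (‖f a‖ + ε) * exp (Φ x - Φ a + ε * (x - a))
    have hB_pos : ∀ x, 0 < B x := fun x ↦ by positivity
    refine image_norm_le_of_norm_deriv_right_lt_deriv_boundary' (B' := fun x ↦ B x * (φ x + ε))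
      hf hf' (by simp [hε.le]) (by fun_prop) (fun x hx ↦ ?_) (fun x hx hfx ↦ ?_)
    · exact ((((hΦ' x hx).sub_const (Φ a)).add (((hasDerivWithinAt_id x _).sub_const a).const_mul
        ε)).exp.const_mul (‖f a‖ + ε)).congr_deriv (by simp only [B, Pi.add_apply, id]; ring)
    · calc ‖f' x‖ ≤ φ x * B x := (bound x hx).trans_eq (by rw [hfx])
        _ < B x * (φ x + ε) := by nlinarith [hB_pos x]
  intro x hx
  have hlim : Tendsto (fun ε ↦ (‖f a‖ + ε) * exp (Φ x - Φ a + ε * (x - a))) (𝓝[>] 0)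
      (𝓝 (‖f a‖ * exp (Φ x - Φ a))) := by
    refine tendsto_nhdsWithin_of_tendsto_nhds ?_
    have hcont : Continuous fun ε ↦ (‖f a‖ + ε) * exp (Φ x - Φ a + ε * (x - a)) := by fun_prop
    convert hcont.tendsto 0 using 2
    simp
  exact ge_of_tendsto hlim (eventually_nhdsWithin_of_forall fun ε hε ↦ approx ε hε x hx)

theorem norm_sub_le_sub_of_norm_deriv_right_le {E : Type*} [NormedAddCommGroup E]
    [NormedSpace ℝ E] {f f' : ℝ → E} {B B' : ℝ → ℝ} {a b : ℝ}
    (hf : ContinuousOn f (Icc a b)) (hf' : ∀ x ∈ Ico a b, HasDerivWithinAt f (f' x) (Ici x) x)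
    (hB : ContinuousOn B (Icc a b)) (hB' : ∀ x ∈ Ico a b, HasDerivWithinAt B (B' x) (Ici x) x)
    (bound : ∀ x ∈ Ico a b, ‖f' x‖ ≤ B' x) :
    ∀ x ∈ Icc a b, ‖f x - f a‖ ≤ B x - B a :=
  image_norm_le_of_norm_deriv_right_le_deriv_boundary' (hf.sub continuousOn_const)
    (fun x hx ↦ (hf' x hx).sub_const (f a)) (by simp) (hB.sub continuousOn_const)
    (fun x hx ↦ (hB' x hx).sub_const (B a)) bound

theorem exists_tendsto_atTop_of_norm_sub_le {E : Type*} [NormedAddCommGroup E] [CompleteSpace E]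
    {f : ℝ → E} {g : ℝ → ℝ} {a : ℝ}
    (hg : Tendsto g atTop (𝓝 0)) (hfg : ∀ t s, a ≤ t → t ≤ s → ‖f s - f t‖ ≤ g t) :
    ∃ L, Tendsto f atTop (𝓝 L) ∧ ∀ t, a ≤ t → ‖f t - L‖ ≤ g t := by
  have hcauchy : CauchySeq f := Metric.cauchySeq_iff'.2 fun ε hε ↦ by
    obtain ⟨N, haN, hgN⟩ := ((eventually_ge_atTop a).and (hg.eventually (gt_mem_nhds hε))).exists
    exact ⟨N, fun s hs ↦ (dist_eq_norm _ _).trans_lt ((hfg N s haN hs).trans_lt hgN)⟩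
  obtain ⟨L, hL⟩ := cauchySeq_tendsto_of_complete hcauchy
  refine ⟨L, hL, fun t ht ↦ ?_⟩
  rw [norm_sub_rev]
  exact le_of_tendsto (hL.sub_const (f t)).norm
    ((eventually_ge_atTop t).mono fun s hs ↦ hfg t s ht hs)

theorem hasDerivAt_neg_one_add_rpow_neg_div {μ t : ℝ} (hμ : μ ≠ 0) (ht : -1 < t) :
    HasDerivAt (fun r ↦ -(1 + r) ^ (-μ) / μ) ((1 + t) ^ (-1 - μ)) t := by
  refine ((((hasDerivAt_id t).const_add 1).rpow_const (p := -μ)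
    (Or.inl (by linarith : (0 : ℝ) < 1 + t).ne')).neg.div_const μ).congr_deriv ?_
  rw [id, show -μ - 1 = -1 - μ by ring]
  field_simp

theorem tendsto_one_add_rpow_neg_atTop {μ : ℝ} (hμ : 0 < μ) :
    Tendsto (fun t : ℝ ↦ (1 + t) ^ (-μ)) atTop (𝓝 0) :=
  (tendsto_rpow_neg_atTop hμ).comp (tendsto_atTop_add_const_left _ 1 tendsto_id)

theorem norm_le_exp_div_mul_norm_zero {E : Type*} [NormedAddCommGroup E] [NormedSpace ℝ E]
    {μ C : ℝ} {A : ℝ → E →L[ℝ] E} {u : ℝ → E} (hμ : 0 < μ) (hC : 0 ≤ C)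
    (hAbound : ∀ t, 0 ≤ t → ‖A t‖ ≤ C * (1 + t) ^ (-1 - μ))
    (hu : ∀ t, 0 ≤ t → HasDerivAt u (A t (u t)) t) {t : ℝ} (ht : 0 ≤ t) :
    ‖u t‖ ≤ exp (C / μ) * ‖u 0‖ := by
  have hΦ (x : ℝ) (hx : 0 ≤ x) :
      HasDerivAt (fun r ↦ C * (-(1 + r) ^ (-μ) / μ)) (C * (1 + x) ^ (-1 - μ)) x :=
    (hasDerivAt_neg_one_add_rpow_neg_div hμ.ne' (by linarith)).const_mul C
  have hgronwall := norm_le_mul_exp_sub_of_norm_deriv_right_le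
    (fun x hx ↦ (hu x hx.1).continuousAt.continuousWithinAt)
    (fun x hx ↦ (hu x hx.1).hasDerivWithinAt)
    (fun x hx ↦ (hΦ x hx.1).continuousAt.continuousWithinAt)
    (fun x hx ↦ (hΦ x hx.1).hasDerivWithinAt)
    (fun x hx ↦ (A x).le_of_opNorm_le (hAbound x hx.1) _) t ⟨ht, le_rfl⟩
  have hexp : C * (-(1 + t) ^ (-μ) / μ) - C * (-(1 + 0) ^ (-μ) / μ) ≤ C / μ := by
    have : 0 ≤ (1 + t) ^ (-μ) := rpow_nonneg (by linarith) _
    rw [add_zero, one_rpow, ← mul_sub, ← sub_div, mul_div_assoc']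
    exact div_le_div_of_nonneg_right (mul_le_of_le_one_right hC (by linarith)) hμ.le
  exact hgronwall.trans_eq (mul_comm _ _) |>.trans (by gcongr)

theorem norm_sub_le_of_norm_deriv_le_mul_one_add_rpow {E : Type*} [NormedAddCommGroup E]
    [NormedSpace ℝ E] {f f' : ℝ → E} {μ K : ℝ} (hμ : 0 < μ) (hK : 0 ≤ K)
    (hf : ∀ t, 0 ≤ t → HasDerivAt f (f' t) t)
    (bound : ∀ t, 0 ≤ t → ‖f' t‖ ≤ K * (1 + t) ^ (-1 - μ)) {t s : ℝ} (ht : 0 ≤ t) (hts : t ≤ s) :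
    ‖f s - f t‖ ≤ K / μ * (1 + t) ^ (-μ) := by
  have hB (x : ℝ) (hx : t ≤ x) :
      HasDerivAt (fun r ↦ K * (-(1 + r) ^ (-μ) / μ)) (K * (1 + x) ^ (-1 - μ)) x :=
    (hasDerivAt_neg_one_add_rpow_neg_div hμ.ne' (by linarith)).const_mul K
  have hmvt := norm_sub_le_sub_of_norm_deriv_right_le
    (fun x hx ↦ (hf x (ht.trans hx.1)).continuousAt.continuousWithinAt)
    (fun x hx ↦ (hf x (ht.trans hx.1)).hasDerivWithinAt)
    (fun x hx ↦ (hB x hx.1).continuousAt.continuousWithinAt)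
    (fun x hx ↦ (hB x hx.1).hasDerivWithinAt)
    (fun x hx ↦ bound x (ht.trans hx.1)) s ⟨hts, le_rfl⟩
  have : 0 ≤ (1 + s) ^ (-μ) := rpow_nonneg (by linarith) _
  calc ‖f s - f t‖ ≤ K * ((1 + t) ^ (-μ) - (1 + s) ^ (-μ)) / μ := hmvt.trans_eq (by ring)
    _ ≤ K * (1 + t) ^ (-μ) / μ := by gcongr; linarith
    _ = K / μ * (1 + t) ^ (-μ) := by ring

theorem linear_ode_decay_limit_general {E : Type*} [NormedAddCommGroup E] [NormedSpace ℝ E]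
    [CompleteSpace E] (μ C : ℝ) (hμ : 0 < μ) (hC : 0 ≤ C)
    (A : ℝ → E →L[ℝ] E)
    (hAbound : ∀ t, 0 ≤ t → ‖A t‖ ≤ C * (1 + t) ^ (-1 - μ))
    (u : ℝ → E) (hu : ∀ t, 0 ≤ t → HasDerivAt u (A t (u t)) t) :
    (∀ t, 0 ≤ t → ‖u t‖ ≤ Real.exp (C / μ) * ‖u 0‖) ∧
    ∃ uinf : E, Tendsto u atTop (nhds uinf) ∧
      ∀ t, 0 ≤ t → ‖u t - uinf‖ ≤ (C / μ) * Real.exp (C / μ) * ‖u 0‖ * (1 + t) ^ (-μ) := by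
  have hbound (t : ℝ) (ht : 0 ≤ t) : ‖u t‖ ≤ exp (C / μ) * ‖u 0‖ :=
    norm_le_exp_div_mul_norm_zero hμ hC hAbound hu ht
  set K := C * exp (C / μ) * ‖u 0‖
  have hK : 0 ≤ K := by positivity
  have hderiv (t : ℝ) (ht : 0 ≤ t) : ‖A t (u t)‖ ≤ K * (1 + t) ^ (-1 - μ) :=
    calc ‖A t (u t)‖ ≤ C * (1 + t) ^ (-1 - μ) * (exp (C / μ) * ‖u 0‖) :=
          (A t).le_of_opNorm_le (hAbound t ht) _ |>.trans (by gcongr; exact hbound t ht)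
      _ = K * (1 + t) ^ (-1 - μ) := by ring
  obtain ⟨uinf, hlim, hrate⟩ := exists_tendsto_atTop_of_norm_sub_le
    (by simpa using (tendsto_one_add_rpow_neg_atTop hμ).const_mul (K / μ))
    fun t s ht hts ↦ norm_sub_le_of_norm_deriv_le_mul_one_add_rpow hμ hK hu hderiv ht hts
  exact ⟨hbound, uinf, hlim, fun t ht ↦ (hrate t ht).trans_eq (by ring)⟩

/-- If `u′(t) = A(t)u(t)` on `[0,∞)` with `A` continuous and `‖A(t)‖ ≤ C(1+t)^{−1−μ}`,
`μ > 0`, then `u` is uniformly bounded by `exp(C/μ)‖u(0)‖`, converges to a limit `u∞` as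
`t → +∞`, and `‖u(t) − u∞‖ ≤ (C/μ) exp(C/μ) ‖u(0)‖ (1+t)^{−μ}` for `t ≥ 0`. -/
theorem linear_ode_decay_limit {E : Type*} [NormedAddCommGroup E] [NormedSpace ℝ E]
    [CompleteSpace E] (μ C : ℝ) (hμ : 0 < μ) (hC : 0 ≤ C)
    (A : ℝ → E →L[ℝ] E) (hAcont : ContinuousOn A (Ici 0))
    (hAbound : ∀ t, 0 ≤ t → ‖A t‖ ≤ C * (1 + t) ^ (-1 - μ))
    (u : ℝ → E) (hu : ∀ t, 0 ≤ t → HasDerivAt u (A t (u t)) t) :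
    (∀ t, 0 ≤ t → ‖u t‖ ≤ Real.exp (C / μ) * ‖u 0‖) ∧
    ∃ uinf : E, Tendsto u atTop (nhds uinf) ∧
      ∀ t, 0 ≤ t → ‖u t - uinf‖ ≤ (C / μ) * Real.exp (C / μ) * ‖u 0‖ * (1 + t) ^ (-μ) :=
  linear_ode_decay_limit_general μ C hμ hC A hAbound u hu
end
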